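/- arXiv:2110.06302 — 2 statements merged into one kernel-verified Lean document; each statement's English description precedes it below -/
import Mathlib

section
/- Let $G$ be a locally compact group, $1 < p < \infty$ with conjugate exponent $q$, and let $\Delta$ denote the modular function of $G$. If $f \in L^p(G)$ is such that $g * f$ exists and lies in $L^p(G)$ for all $g \in L^p(G)$ with $\|f\|_p^T := \sup\{\|g*f\|_p : g \in L^p(G), \|g\|_p \le 1\} < \infty$, then for every $x \in G$ the function $f * \delta_x$ (right translate weighted appropriately) also has this property, and $\|f * \delta_x\|_p^T = \Delta(x)^{-1/q} \|f\|_p^T$. -/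
open MeasureTheory ENNReal

/-- Convolution `g * f` on a (multiplicative) group: `(g*f)(x) = ∫ g(y) f(y⁻¹x) dμ(y)`. -/
noncomputable def conv {G : Type*} [Group G] [MeasurableSpace G] (μ : Measure G)
    (g f : G → ℂ) : G → ℂ :=
  fun x => ∫ y, g y * f (y⁻¹ * x) ∂μ

/-- `g * f` exists: the defining integrand is integrable for a.e. `x`. -/
def ConvExists {G : Type*} [Group G] [MeasurableSpace G] (μ : Measure G)
    (g f : G → ℂ) : Prop :=
  ∀ᵐ x ∂μ, Integrable (fun y => g y * f (y⁻¹ * x)) μ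

/-- `f ∈ L^T_p(G)`: `f ∈ L^p` and for all `g ∈ L^p`, `g * f` exists and lies in `L^p`. -/
def MemLT {G : Type*} [Group G] [MeasurableSpace G] (μ : Measure G) (p : ℝ≥0∞)
    (f : G → ℂ) : Prop :=
  MemLp f p μ ∧ ∀ g : G → ℂ, MemLp g p μ → ConvExists μ g f ∧ MemLp (conv μ g f) p μ

/-- The norm `‖f‖_p^T = sup {‖g*f‖_p : g ∈ L^p, ‖g‖_p ≤ 1}` (in `ℝ≥0∞`). -/
noncomputable def normT {G : Type*} [Group G] [MeasurableSpace G] (μ : Measure G)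
    (p : ℝ≥0∞) (f : G → ℂ) : ℝ≥0∞ :=
  ⨆ (g : G → ℂ) (_ : MemLp g p μ ∧ eLpNorm g p μ ≤ 1), eLpNorm (conv μ g f) p μ

/-! Left convolution commutes with right translation, `g * (f * δ_x) = (g * f) * δ_x`, and
right translation by `x⁻¹` pushes `μ` forward to `Δ(x) • μ`, so it multiplies every `L^p` norm by
`Δ(x)^{1/p}`; with the weight `Δ(x)⁻¹` this is the factor `Δ(x)^{-1/q}`. -/

section RightTranslate

variable {G : Type*} [Group G] [MeasurableSpace G] {μ : Measure G} {p c : ℝ≥0∞}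

theorem conv_const_mul_comp_mul_const_inv (g f : G → ℂ) (a : ℂ) (x : G) :
    conv μ g (fun y => a * f (y * x⁻¹)) = fun w => a * conv μ g f (w * x⁻¹) := by
  funext w
  simp only [conv, ← integral_const_mul, mul_assoc, mul_left_comm a]

variable [MeasurableMul G] {x : G}

theorem map_mul_const_inv_eq_smul_of_preimage
    (h : ∀ s, MeasurableSet s → μ ((fun y => y * x⁻¹) ⁻¹' s) = c * μ s) :
    μ.map (· * x⁻¹) = c • μ := by
  ext s hs
  rw [Measure.map_apply (measurable_mul_const _) hs, h s hs, Measure.smul_apply, smul_eq_mul]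

theorem measurableEmbedding_mul_const_inv (x : G) : MeasurableEmbedding (· * x⁻¹ : G → G) :=
  (MeasurableEquiv.mulRight x⁻¹).measurableEmbedding

variable (hx : μ.map (· * x⁻¹) = c • μ)
include hx

theorem eLpNorm_comp_mul_const_inv (hc : c ≠ 0) (h : G → ℂ) :
    eLpNorm (fun y => h (y * x⁻¹)) p μ = c ^ (1 / p).toReal * eLpNorm h p μ := by
  rw [← smul_eq_mul, ← eLpNorm_smul_measure_of_ne_zero hc, ← hx,
    (measurableEmbedding_mul_const_inv x).eLpNorm_map_measure]
  rfl

theorem MemLp.comp_mul_const_inv (hc : c ≠ ∞) {h : G → ℂ} (hh : MemLp h p μ) :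
    MemLp (fun y => h (y * x⁻¹)) p μ := by
  have : MemLp h p (μ.map (· * x⁻¹)) := hx ▸ hh.smul_measure hc
  exact (measurableEmbedding_mul_const_inv x).memLp_map_measure_iff.1 this

theorem ConvExists.const_mul_comp_mul_const_inv {g f : G → ℂ} (hgf : ConvExists μ g f)
    (a : ℂ) :
    ConvExists μ g (fun y => a * f (y * x⁻¹)) := by
  have hmap : ∀ᵐ w ∂μ.map (· * x⁻¹), Integrable (fun z => g z * f (z⁻¹ * w)) μ :=
    hx ▸ Measure.ae_smul_measure hgf c
  filter_upwards [(measurableEmbedding_mul_const_inv x).ae_map_iff.1 hmap] with w hw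
  simpa only [mul_assoc, mul_left_comm a] using hw.const_mul a

theorem MemLT.const_mul_comp_mul_const_inv (hc : c ≠ ∞) {f : G → ℂ} (hf : MemLT μ p f)
    (a : ℂ) :
    MemLT μ p (fun y => a * f (y * x⁻¹)) := by
  refine ⟨(MemLp.comp_mul_const_inv hx hc hf.1).const_mul a, fun g hg => ⟨?_, ?_⟩⟩
  · exact (hf.2 g hg).1.const_mul_comp_mul_const_inv hx a
  · rw [conv_const_mul_comp_mul_const_inv]
    exact (MemLp.comp_mul_const_inv hx hc (hf.2 g hg).2).const_mul a

theorem normT_const_mul_comp_mul_const_inv (hc : c ≠ 0) (f : G → ℂ) (a : ℂ) :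
    normT μ p (fun y => a * f (y * x⁻¹)) = ‖a‖ₑ * c ^ (1 / p).toReal * normT μ p f := by
  have hscale (h : G → ℂ) : eLpNorm (fun y => a * h (y * x⁻¹)) p μ
      = ‖a‖ₑ * c ^ (1 / p).toReal * eLpNorm h p μ := by
    rw [mul_assoc, ← eLpNorm_comp_mul_const_inv hx hc, ← eLpNorm_const_smul]
    rfl
  simp only [normT, conv_const_mul_comp_mul_const_inv, hscale, ENNReal.mul_iSup]

end RightTranslate

theorem enorm_inv_mul_ofReal_rpow {r p q : ℝ} (hr : 0 < r) (hpq : p⁻¹ + q⁻¹ = 1) :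
    ‖((r : ℂ))⁻¹‖ₑ * ENNReal.ofReal r ^ p⁻¹ = ENNReal.ofReal (r ^ (-(1 / q))) := by
  rw [← ofReal_norm, norm_inv, Complex.norm_real, Real.norm_of_nonneg hr.le,
    ENNReal.ofReal_rpow_of_pos hr, ← ENNReal.ofReal_mul (inv_nonneg.2 hr.le),
    ← Real.rpow_neg_one, ← Real.rpow_add hr]
  congr 2
  linarith [one_div q]

theorem stmt1_general {G : Type*} [Group G] [TopologicalSpace G] [IsTopologicalGroup G]
    [MeasurableSpace G] [BorelSpace G]
    (μ : Measure G)
    (p : ℝ≥0∞) (q : ℝ) (hpq : p.toReal⁻¹ + q⁻¹ = 1)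
    (Δ : G → ℝ) (hΔpos : ∀ x, 0 < Δ x)
    (hΔ : ∀ (x : G) (s : Set G), MeasurableSet s →
      μ ((fun y => y * x⁻¹) ⁻¹' s) = ENNReal.ofReal (Δ x) * μ s)
    (f : G → ℂ) (hf : MemLT μ p f) (x : G) :
    MemLT μ p (fun y => ((Δ x : ℂ))⁻¹ * f (y * x⁻¹)) ∧
    normT μ p (fun y => ((Δ x : ℂ))⁻¹ * f (y * x⁻¹)) =
      ENNReal.ofReal (Δ x ^ (-(1 / q))) * normT μ p f := by
  have hmap := map_mul_const_inv_eq_smul_of_preimage (hΔ x)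
  refine ⟨hf.const_mul_comp_mul_const_inv hmap ofReal_ne_top _, ?_⟩
  rw [normT_const_mul_comp_mul_const_inv hmap (ENNReal.ofReal_pos.2 (hΔpos x)).ne',
    one_div, ENNReal.toReal_inv, enorm_inv_mul_ofReal_rpow (hΔpos x) hpq]

theorem stmt1 {G : Type*} [Group G] [TopologicalSpace G] [IsTopologicalGroup G]
    [LocallyCompactSpace G] [MeasurableSpace G] [BorelSpace G]
    (μ : Measure G) [μ.IsHaarMeasure]
    (p : ℝ≥0∞) (hp1 : 1 < p) (hp : p ≠ ∞) (q : ℝ) (hpq : p.toReal⁻¹ + q⁻¹ = 1)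
    (Δ : G → ℝ) (hΔpos : ∀ x, 0 < Δ x)
    (hΔ : ∀ (x : G) (s : Set G), MeasurableSet s →
      μ ((fun y => y * x⁻¹) ⁻¹' s) = ENNReal.ofReal (Δ x) * μ s)
    (f : G → ℂ) (hf : MemLT μ p f) (x : G) :
    MemLT μ p (fun y => ((Δ x : ℂ))⁻¹ * f (y * x⁻¹)) ∧
    normT μ p (fun y => ((Δ x : ℂ))⁻¹ * f (y * x⁻¹)) =
      ENNReal.ofReal (Δ x ^ (-(1 / q))) * normT μ p f :=
  stmt1_general μ p q hpq Δ hΔpos hΔ f hf x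
end

section
/- Let $G$ be a locally compact group, $1 < p < \infty$ with conjugate exponent $q$, and $f \in L^T_p(G)$. Then for every $x \in G$, the left translate $\delta_x * f$ belongs to $L^T_p(G)$ and $\|\delta_x * f\|_p^T = \Delta(x)^{-1/q} \|f\|_p^T$. -/
open MeasureTheory ENNReal

/-! Right translation by `y` rescales the Haar measure by the modular function:
`μ.map (· * y) = c • μ` with `c = Δ(y⁻¹)`. Substituting `t ↦ t * y` in the convolution integral gives
`g * (δ_{y⁻¹} * f) = c⁻¹ • (g(· y) * f)`, while `‖g(· y)‖_p = c^{1/p} ‖g‖_p`. Normalising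
`g(· y)` in `L^p` therefore bounds `‖δ_{y⁻¹} * f‖_p^T` by `c^{1/p - 1} ‖f‖_p^T = c^{-1/q} ‖f‖_p^T`,
and the reverse bound is the same estimate for `y⁻¹`, using `Δ(x⁻¹) = Δ(x)⁻¹`. -/

section RightTranslation

variable {G : Type*} [Group G] [MeasurableSpace G] [MeasurableMul G] {μ : Measure G}
  {y : G} {c : ℝ}

lemma map_mul_right_eq_smul
    (h : ∀ s, MeasurableSet s → μ ((· * y) ⁻¹' s) = ENNReal.ofReal c * μ s) :
    μ.map (· * y) = ENNReal.ofReal c • μ := by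
  ext s hs
  rw [Measure.map_apply (measurable_mul_const y) hs, Measure.smul_apply, smul_eq_mul]
  exact h s hs

lemma mul_eq_one_of_map_mul_right_eq_smul {a b : ℝ} (ha : 0 ≤ a)
    (hμa : μ.map (· * y) = ENNReal.ofReal a • μ)
    (hμb : μ.map (· * y⁻¹) = ENNReal.ofReal b • μ)
    {K : Set G} (hK0 : μ K ≠ 0) (hKtop : μ K ≠ ∞) : a * b = 1 := by
  have hμ : (ENNReal.ofReal (a * b)) • μ = μ := by
    calc ENNReal.ofReal (a * b) • μ = (μ.map (· * y)).map (· * y⁻¹) := by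
          rw [hμa, Measure.map_smul, hμb, smul_smul, ENNReal.ofReal_mul ha, mul_comm]
      _ = μ := by
          rw [Measure.map_map (measurable_mul_const _) (measurable_mul_const _)]
          simp [Function.comp_def]
  have hK : ENNReal.ofReal (a * b) * μ K = 1 * μ K := by
    rw [one_mul]; exact congrArg (· K) hμ
  rwa [ENNReal.mul_left_inj hK0 hKtop, ENNReal.ofReal_eq_one] at hK

variable (hμ : μ.map (· * y) = ENNReal.ofReal c • μ)
include hμ

lemma integral_comp_mul_right_of_map_eq {E : Type*} [NormedAddCommGroup E] [NormedSpace ℝ E]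
    (hc : 0 ≤ c) (H : G → E) : ∫ t, H (t * y) ∂μ = c • ∫ t, H t ∂μ := by
  have h := integral_map_equiv (μ := μ) (MeasurableEquiv.mulRight y) H
  rw [MeasurableEquiv.coe_mulRight, hμ, integral_smul_measure, ENNReal.toReal_ofReal hc] at h
  exact h.symm

lemma integrable_comp_mul_right_iff_of_map_eq {E : Type*} [NormedAddCommGroup E]
    (hc : 0 < c) (H : G → E) : Integrable (fun t => H (t * y)) μ ↔ Integrable H μ := by
  have h := integrable_map_equiv (μ := μ) (MeasurableEquiv.mulRight y) H
  rw [MeasurableEquiv.coe_mulRight, hμ,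
    integrable_smul_measure (ENNReal.ofReal_pos.2 hc).ne' ENNReal.ofReal_ne_top] at h
  exact h.symm

lemma eLpNorm_comp_mul_right_of_map_eq {E : Type*} [NormedAddCommGroup E] {p : ℝ≥0∞}
    (hp : p ≠ ∞) (g : G → E) :
    eLpNorm (fun t => g (t * y)) p μ = ENNReal.ofReal c ^ p.toReal⁻¹ * eLpNorm g p μ := by
  have h := (MeasurableEquiv.mulRight y).measurableEmbedding.eLpNorm_map_measure (g := g)
    (p := p) (μ := μ)
  rw [MeasurableEquiv.coe_mulRight, hμ, eLpNorm_smul_measure_of_ne_top hp, one_div,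
    ENNReal.toReal_inv] at h
  exact h.symm

lemma MeasureTheory.MemLp.comp_mul_right_of_map_eq {E : Type*} [NormedAddCommGroup E] {p : ℝ≥0∞}
    {g : G → E} (hg : MemLp g p μ) : MemLp (fun t => g (t * y)) p μ := by
  refine (MeasurableEquiv.mulRight y).memLp_map_measure_iff.1 ?_
  rw [MeasurableEquiv.coe_mulRight, hμ]
  exact hg.smul_measure ENNReal.ofReal_ne_top

lemma conv_comp_mul_left_of_map_eq (hc : 0 < c) (g f : G → ℂ) :
    conv μ g (fun z => f (y * z)) = c⁻¹ • conv μ (fun t => g (t * y)) f := by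
  funext z
  rw [Pi.smul_apply, eq_inv_smul_iff₀ hc.ne']
  -- `y * ((t * y)⁻¹ * z) = t⁻¹ * z`
  have hsubst : (fun t => g (t * y) * f (t⁻¹ * z))
      = fun t => (fun s => g s * f (y * (s⁻¹ * z))) (t * y) := by
    funext t
    simp [mul_assoc]
  simp only [conv]
  rw [hsubst]
  exact (integral_comp_mul_right_of_map_eq hμ hc.le _).symm

lemma convExists_comp_mul_left_iff_of_map_eq (hc : 0 < c) (g f : G → ℂ) :
    ConvExists μ g (fun z => f (y * z)) ↔ ConvExists μ (fun t => g (t * y)) f := by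
  refine Filter.eventually_congr (Filter.Eventually.of_forall fun z => ?_)
  rw [← integrable_comp_mul_right_iff_of_map_eq hμ hc]
  simp [mul_assoc]

lemma MemLT.comp_mul_left_of_map_eq [μ.IsMulLeftInvariant] (hc : 0 < c) {p : ℝ≥0∞}
    {f : G → ℂ} (hf : MemLT μ p f) : MemLT μ p (fun z => f (y * z)) := by
  refine ⟨hf.1.comp_measurePreserving (measurePreserving_mul_left μ y), fun g hg => ?_⟩
  obtain ⟨hex, hmem⟩ := hf.2 _ (hg.comp_mul_right_of_map_eq hμ)
  refine ⟨(convExists_comp_mul_left_iff_of_map_eq hμ hc g f).2 hex, ?_⟩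
  rw [conv_comp_mul_left_of_map_eq hμ hc]
  exact hmem.const_smul _

lemma normT_comp_mul_left_le_of_map_eq (hc : 0 < c) {p : ℝ≥0∞} (hp : p ≠ ∞) (f : G → ℂ) :
    normT μ p (fun z => f (y * z)) ≤ ENNReal.ofReal (c ^ (p.toReal⁻¹ - 1)) * normT μ p f := by
  set r := p.toReal⁻¹
  refine iSup₂_le fun g hg => ?_
  set g' : G → ℂ := c ^ (-r) • fun t => g (t * y)
  have hg' : MemLp g' p μ := (hg.1.comp_mul_right_of_map_eq hμ).const_smul _
  have hg'1 : eLpNorm g' p μ ≤ 1 := by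
    calc eLpNorm g' p μ
        = ENNReal.ofReal (c ^ (-r)) * (ENNReal.ofReal c ^ r * eLpNorm g p μ) := by
          rw [eLpNorm_const_smul, eLpNorm_comp_mul_right_of_map_eq hμ hp,
            Real.enorm_eq_ofReal (by positivity)]
      _ = eLpNorm g p μ := by
          rw [← mul_assoc, ENNReal.ofReal_rpow_of_pos hc, ← ENNReal.ofReal_mul (by positivity),
            ← Real.rpow_add hc, neg_add_cancel, Real.rpow_zero, ENNReal.ofReal_one, one_mul]
      _ ≤ 1 := hg.2
  have hconv : conv μ g (fun z => f (y * z)) = c ^ (r - 1) • conv μ g' f := by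
    have hg'conv : conv μ g' f = c ^ (-r) • conv μ (fun t => g (t * y)) f := by
      funext z
      simp only [conv, g', Pi.smul_apply, smul_mul_assoc]
      exact integral_smul _ _
    rw [conv_comp_mul_left_of_map_eq hμ hc, hg'conv, smul_smul, ← Real.rpow_add hc,
      show r - 1 + -r = -1 by ring, Real.rpow_neg_one]
  calc eLpNorm (conv μ g (fun z => f (y * z))) p μ
      = ENNReal.ofReal (c ^ (r - 1)) * eLpNorm (conv μ g' f) p μ := by
        rw [hconv, eLpNorm_const_smul, Real.enorm_eq_ofReal (by positivity)]
    _ ≤ ENNReal.ofReal (c ^ (r - 1)) * normT μ p f := by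
        gcongr
        exact le_iSup₂ (f := fun g (_ : MemLp g p μ ∧ eLpNorm g p μ ≤ 1) =>
          eLpNorm (conv μ g f) p μ) g' ⟨hg', hg'1⟩

end RightTranslation

theorem stmt2_general {G : Type*} [Group G] [TopologicalSpace G] [IsTopologicalGroup G]
    [LocallyCompactSpace G] [MeasurableSpace G] [BorelSpace G]
    (μ : Measure G) [μ.IsHaarMeasure]
    (p : ℝ≥0∞) (hp : p ≠ ∞) (q : ℝ) (hpq : p.toReal⁻¹ + q⁻¹ = 1)
    (Δ : G → ℝ) (hΔpos : ∀ x, 0 < Δ x)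
    (hΔ : ∀ (x : G) (s : Set G), MeasurableSet s →
      μ ((fun y => y * x⁻¹) ⁻¹' s) = ENNReal.ofReal (Δ x) * μ s)
    (f : G → ℂ) (hf : MemLT μ p f) (x : G) :
    MemLT μ p (fun y => f (x⁻¹ * y)) ∧
    normT μ p (fun y => f (x⁻¹ * y)) =
      ENNReal.ofReal (Δ x ^ (-(1 / q))) * normT μ p f := by
  have hmap : ∀ x : G, μ.map (· * x⁻¹) = ENNReal.ofReal (Δ x) • μ := fun x =>
    map_mul_right_eq_smul (hΔ x)
  have hmap' : μ.map (· * x) = ENNReal.ofReal (Δ x⁻¹) • μ := by simpa using hmap x⁻¹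
  obtain ⟨K, hK, hK1⟩ := exists_compact_mem_nhds (1 : G)
  have hΔinv : Δ x⁻¹ = (Δ x)⁻¹ := eq_inv_of_mul_eq_one_right <|
    mul_eq_one_of_map_mul_right_eq_smul (hΔpos x).le (hmap x) (by simpa using hmap')
      (μ.measure_pos_of_mem_nhds hK1).ne' hK.measure_lt_top.ne
  rw [show -(1 / q) = p.toReal⁻¹ - 1 by rw [one_div]; linarith]
  set a := Δ x ^ (p.toReal⁻¹ - 1)
  have ha : 0 < a := Real.rpow_pos_of_pos (hΔpos x) _
  have hle : normT μ p f ≤ ENNReal.ofReal a⁻¹ * normT μ p (fun y => f (x⁻¹ * y)) := by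
    have h := normT_comp_mul_left_le_of_map_eq hmap' (hΔpos _) hp (fun y => f (x⁻¹ * y))
    simp only [inv_mul_cancel_left] at h
    rwa [hΔinv, Real.inv_rpow (hΔpos x).le] at h
  refine ⟨hf.comp_mul_left_of_map_eq (hmap x) (hΔpos x),
    le_antisymm (normT_comp_mul_left_le_of_map_eq (hmap x) (hΔpos x) hp f) ?_⟩
  calc ENNReal.ofReal a * normT μ p f
      ≤ ENNReal.ofReal a * (ENNReal.ofReal a⁻¹ * normT μ p (fun y => f (x⁻¹ * y))) := by
        gcongr
    _ = normT μ p (fun y => f (x⁻¹ * y)) := by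
        rw [← mul_assoc, ← ENNReal.ofReal_mul ha.le, mul_inv_cancel₀ ha.ne',
          ENNReal.ofReal_one, one_mul]

theorem stmt2 {G : Type*} [Group G] [TopologicalSpace G] [IsTopologicalGroup G]
    [LocallyCompactSpace G] [MeasurableSpace G] [BorelSpace G]
    (μ : Measure G) [μ.IsHaarMeasure]
    (p : ℝ≥0∞) (hp1 : 1 < p) (hp : p ≠ ∞) (q : ℝ) (hpq : p.toReal⁻¹ + q⁻¹ = 1)
    (Δ : G → ℝ) (hΔpos : ∀ x, 0 < Δ x)
    (hΔ : ∀ (x : G) (s : Set G), MeasurableSet s →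
      μ ((fun y => y * x⁻¹) ⁻¹' s) = ENNReal.ofReal (Δ x) * μ s)
    (f : G → ℂ) (hf : MemLT μ p f) (x : G) :
    MemLT μ p (fun y => f (x⁻¹ * y)) ∧
    normT μ p (fun y => f (x⁻¹ * y)) =
      ENNReal.ofReal (Δ x ^ (-(1 / q))) * normT μ p f :=
  stmt2_general μ p hp q hpq Δ hΔpos hΔ f hf x
end
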